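/- For all real numbers d₁, d₂ ≥ 1, the number μ(d₁,d₂) = (d₁+d₂)/2 − sqrt(((d₂−d₁)/2)² + r₊²) is a root of the quartic P, i.e. P(μ(d₁,d₂)) = 0. -/
import Mathlib

/-- The paper's asymptotic algebraic connectivity of a random `(d₁,d₂)` semi-regular
bipartite graph. -/
noncomputable def muRSRB (d₁ d₂ : ℝ) : ℝ :=
  (d₁ + d₂) / 2 -
    Real.sqrt (((d₂ - d₁) / 2) ^ 2 +
      Real.sqrt (d₁ + d₂ - 2 + Real.sqrt ((d₁ + d₂ - 2) ^ 2 - (d₂ - d₁) ^ 2)) ^ 2)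

/-- For `d₁, d₂ ≥ 1`, the value `μ(d₁,d₂) = (d₁+d₂)/2 − sqrt(((d₂−d₁)/2)² + r₊²)` is a
root of the quartic `P`. -/
theorem rsrb_mu_is_root (d₁ d₂ : ℝ) (hd₁ : 1 ≤ d₁) (hd₂ : 1 ≤ d₂) (P : ℝ → ℝ)
    (hP : P = fun μ => μ ^ 4 - 2 * (d₁ + d₂) * μ ^ 3 +
      ((d₁ + d₂) ^ 2 + 2 * d₁ * d₂ - 2 * d₁ - 2 * d₂ + 4) * μ ^ 2 +
      2 * (d₁ + d₂) * (d₁ + d₂ - 2 - d₁ * d₂) * μ + (d₁ * d₂ - d₁ - d₂) ^ 2) :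
    P (muRSRB d₁ d₂) = 0 := by
  subst hP
  set A : ℝ := (d₁ + d₂ - 2) ^ 2 - (d₂ - d₁) ^ 2 with hA
  have hA0 : 0 ≤ A := by nlinarith [mul_nonneg (sub_nonneg.2 hd₁) (sub_nonneg.2 hd₂)]
  set D : ℝ := Real.sqrt A with hDdef
  have hD0 : 0 ≤ D := Real.sqrt_nonneg A
  have hD2 : D ^ 2 = A := Real.sq_sqrt hA0
  have hr0 : 0 ≤ d₁ + d₂ - 2 + D := by linarith
  set r : ℝ := Real.sqrt (d₁ + d₂ - 2 + D) with hrdef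
  have hr2 : r ^ 2 = d₁ + d₂ - 2 + D := Real.sq_sqrt hr0
  have hS0 : 0 ≤ ((d₂ - d₁) / 2) ^ 2 + r ^ 2 := by positivity
  set S : ℝ := Real.sqrt (((d₂ - d₁) / 2) ^ 2 + r ^ 2) with hSdef
  have hS2 : S ^ 2 = ((d₂ - d₁) / 2) ^ 2 + (d₁ + d₂ - 2) + D := by
    rw [hSdef, Real.sq_sqrt hS0, hr2]; ring
  have hmu : muRSRB d₁ d₂ = (d₁ + d₂) / 2 - S := rfl
  rw [hmu]
  simp only
  linear_combination (S ^ 2 - (((d₂ - d₁) / 2) ^ 2 + (d₁ + d₂ - 2)) + D) * hS2 + hD2
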